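/- Laplacian-of-Gaussian form of the blur derivative: if z : ℝⁿ → ℝ is bounded and continuous, then for every t > 0 and x ∈ ℝⁿ, the derivative of the scale space in the scale direction satisfies ∂/∂t (G_t ⋆ z)(x) = (1/4)·((Δ G_t) ⋆ z)(x), where Δ G_t is the Laplacian of the Gaussian kernel. -/

import Mathlib

/-!
The Gaussian solves the heat equation `∂ₜ G_t = ¼ Δ G_t`: both sides equal
`G_t(v) (‖v‖²/t² − n/(2t))`. The scale derivative may be taken under the integral because, for
`t/2 ≤ s ≤ 2t`, it is dominated by a multiple of the integrable Gaussian `exp (−‖v‖²/(4t))`, and `z`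
is bounded.
-/

open MeasureTheory Real

/-- The Gaussian kernel at scale `t` on `ℝⁿ`: `G_t(x) = (π t)^(−n/2) · exp(−‖x‖²/t)`. -/
noncomputable def gaussKernel (n : ℕ) (t : ℝ) (x : EuclideanSpace ℝ (Fin n)) : ℝ :=
  (Real.pi * t) ^ (-(n : ℝ) / 2) * Real.exp (-‖x‖ ^ 2 / t)

/-- Gaussian blur of `z` at scale `t`: `(G_t ⋆ z)(x) = ∫ G_t(x − y) z(y) dy`. -/
noncomputable def gaussBlur (n : ℕ) (t : ℝ) (z : EuclideanSpace ℝ (Fin n) → ℝ)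
    (x : EuclideanSpace ℝ (Fin n)) : ℝ :=
  ∫ y, gaussKernel n t (x - y) * z y

/-- The Laplacian of `f : ℝⁿ → ℝ` at `x`: the sum of second partial derivatives. -/
noncomputable def laplacian (n : ℕ) (f : EuclideanSpace ℝ (Fin n) → ℝ)
    (x : EuclideanSpace ℝ (Fin n)) : ℝ :=
  ∑ i : Fin n, fderiv ℝ (fun y => fderiv ℝ f y (EuclideanSpace.single i 1)) x
      (EuclideanSpace.single i 1)

theorem integrable_exp_neg_mul_sq_norm {V : Type*} [NormedAddCommGroup V] [InnerProductSpace ℝ V]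
    [FiniteDimensional ℝ V] [MeasurableSpace V] [BorelSpace V] {b : ℝ} (hb : 0 < b) :
    Integrable (fun v : V => exp (-b * ‖v‖ ^ 2)) :=
  .of_integral_ne_zero <| by rw [GaussianFourier.integral_rexp_neg_mul_sq_norm hb]; positivity

theorem continuous_gaussKernel (n : ℕ) (t : ℝ) : Continuous (gaussKernel n t) := by
  unfold gaussKernel; fun_prop

theorem gaussKernel_nonneg (n : ℕ) {t : ℝ} (ht : 0 ≤ t) (v : EuclideanSpace ℝ (Fin n)) :
    0 ≤ gaussKernel n t v := by
  unfold gaussKernel; positivity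

theorem integrable_gaussKernel (n : ℕ) {t : ℝ} (ht : 0 < t) : Integrable (gaussKernel n t) := by
  have := (integrable_exp_neg_mul_sq_norm (V := EuclideanSpace ℝ (Fin n)) (inv_pos.2 ht)).const_mul
    ((π * t) ^ (-(n : ℝ) / 2))
  refine this.congr (.of_forall fun v => ?_)
  simp only [gaussKernel, neg_mul, neg_div, inv_mul_eq_div]

theorem hasDerivAt_gaussKernel_scale (n : ℕ) {t : ℝ} (ht : 0 < t) (v : EuclideanSpace ℝ (Fin n)) :
    HasDerivAt (fun s => gaussKernel n s v)
      (gaussKernel n t v * (‖v‖ ^ 2 / t ^ 2 - n / (2 * t))) t := by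
  have hπt : 0 < π * t := by positivity
  have hpow : HasDerivAt (fun s => (π * s) ^ (-(n : ℝ) / 2))
      (π * (-(n : ℝ) / 2) * (π * t) ^ (-(n : ℝ) / 2 - 1)) t := by
    simpa using ((hasDerivAt_id t).const_mul π).rpow_const (p := -(n : ℝ) / 2) (Or.inl hπt.ne')
  have hexp : HasDerivAt (fun s => exp (-‖v‖ ^ 2 / s))
      (exp (-‖v‖ ^ 2 / t) * (‖v‖ ^ 2 / t ^ 2)) t := by
    have := ((hasDerivAt_inv ht.ne').const_mul (-‖v‖ ^ 2)).exp
    convert this using 1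
    · simp only [div_eq_mul_inv]
    · field_simp
  refine (hpow.mul hexp).congr_deriv ?_
  rw [gaussKernel, rpow_sub_one hπt.ne']
  field_simp
  ring

theorem hasFDerivAt_gaussKernel (n : ℕ) (t : ℝ) (y : EuclideanSpace ℝ (Fin n)) :
    HasFDerivAt (gaussKernel n t) ((gaussKernel n t y * (-2 / t)) • innerSL ℝ y) y := by
  have := ((hasStrictFDerivAt_norm_sq y).hasFDerivAt.neg.mul_const t⁻¹).exp.const_mul
    ((π * t) ^ (-(n : ℝ) / 2))
  refine this.congr_fderiv ?_
  ext w
  simp only [gaussKernel, div_eq_mul_inv, neg_mul, Pi.neg_apply, smul_neg,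
    neg_apply, smul_apply, coe_innerSL_apply, nsmul_eq_mul,
    Nat.cast_ofNat, smul_eq_mul, mul_neg, neg_smul, neg_inj]
  ring

theorem fderiv_gaussKernel_apply_single (n : ℕ) (t : ℝ) (i : Fin n) :
    (fun y => fderiv ℝ (gaussKernel n t) y (EuclideanSpace.single i 1))
      = fun y => gaussKernel n t y * (-2 / t * y i) := by
  ext y
  simp [(hasFDerivAt_gaussKernel n t y).fderiv, EuclideanSpace.inner_single_right, mul_assoc]

theorem laplacian_gaussKernel (n : ℕ) (t : ℝ) (v : EuclideanSpace ℝ (Fin n)) :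
    laplacian n (gaussKernel n t) v = gaussKernel n t v * (4 * ‖v‖ ^ 2 / t ^ 2 - 2 * n / t) := by
  have hsecond (i : Fin n) :
      fderiv ℝ (fun y => fderiv ℝ (gaussKernel n t) y (EuclideanSpace.single i 1)) v
        (EuclideanSpace.single i 1) = gaussKernel n t v * (4 * v i ^ 2 / t ^ 2 - 2 / t) := by
    have hcoord : HasFDerivAt (fun y : EuclideanSpace ℝ (Fin n) => -2 / t * y i)
        ((-2 / t) • EuclideanSpace.proj i) v :=
      (EuclideanSpace.proj i : EuclideanSpace ℝ (Fin n) →L[ℝ] ℝ).hasFDerivAt.const_mul (-2 / t)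
    have hprod := (hasFDerivAt_gaussKernel n t v).mul hcoord
    rw [fderiv_gaussKernel_apply_single,
      HasFDerivAt.fderiv (f := fun y => gaussKernel n t y * (-2 / t * y i)) hprod]
    simp only [add_apply, smul_apply, PiLp.proj_apply,
      PiLp.single_eq_same, smul_eq_mul, mul_one, coe_innerSL_apply,
      EuclideanSpace.inner_single_right, conj_trivial, one_mul]
    ring
  have hnorm : ‖v‖ ^ 2 = ∑ i, v i ^ 2 := by
    simp [EuclideanSpace.norm_sq_eq]
  simp only [laplacian, hsecond, ← Finset.mul_sum, hnorm, Finset.sum_sub_distrib, ← Finset.sum_div,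
    ← Finset.mul_sum, Finset.sum_const, Finset.card_univ, Fintype.card_fin, nsmul_eq_mul]
  ring

theorem exp_neg_div_mul_abs_le {a s t : ℝ} (n : ℕ) (ha : 0 ≤ a) (ht : 0 < t)
    (hs : s ∈ Set.Icc (t / 2) (2 * t)) :
    exp (-a / s) * |a / s ^ 2 - n / (2 * s)| ≤ (16 / t + n / t) * exp (-(4 * t)⁻¹ * a) := by
  obtain ⟨hs₁, hs₂⟩ := hs
  have hs₀ : 0 < s := by linarith
  -- `exp (-a / s) ≤ exp (-2 y)`, and one factor `exp (-y)` absorbs the polynomial part since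
  -- `y exp (-y) ≤ 1`.
  set y := (4 * t)⁻¹ * a with hy
  have hy₀ : 0 ≤ y := by positivity
  have hpoly : |a / s ^ 2 - n / (2 * s)| ≤ 16 / t * y + n / t := by
    have h₁ : a / s ^ 2 ≤ 16 / t * y := by
      rw [hy, div_le_iff₀ (by positivity)]
      field_simp
      nlinarith [mul_le_mul hs₁ hs₁ (by positivity) hs₀.le]
    have h₂ : (n : ℝ) / (2 * s) ≤ n / t :=
      div_le_div_of_nonneg_left (by positivity) ht (by linarith)
    have h₃ : 0 ≤ a / s ^ 2 := by positivity
    have h₄ : 0 ≤ (n : ℝ) / (2 * s) := by positivity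
    have h₅ : 0 ≤ 16 / t * y := by positivity
    rw [abs_le]
    constructor <;> linarith
  have hexp : exp (-a / s) ≤ exp (-y) * exp (-y) := by
    have hsum : -y + -y = -(a / (2 * t)) := by rw [hy]; field_simp; ring
    rw [← exp_add, exp_le_exp, hsum, neg_div, neg_le_neg_iff]
    exact div_le_div_of_nonneg_left ha hs₀ hs₂
  have hye : y * exp (-y) ≤ 1 := (mul_exp_neg_le_exp_neg_one y).trans (by simp)
  have he : exp (-y) ≤ 1 := by simpa using hy₀
  calc exp (-a / s) * |a / s ^ 2 - n / (2 * s)|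
      ≤ exp (-y) * exp (-y) * (16 / t * y + n / t) :=
        mul_le_mul hexp hpoly (abs_nonneg _) (by positivity)
    _ = (16 / t * (y * exp (-y)) + n / t * exp (-y)) * exp (-y) := by ring
    _ ≤ (16 / t * 1 + n / t * 1) * exp (-y) := by gcongr
    _ = (16 / t + n / t) * exp (-(4 * t)⁻¹ * a) := by rw [neg_mul]; ring

theorem abs_gaussKernel_mul_le (n : ℕ) {s t : ℝ} (ht : 0 < t) (hs : s ∈ Set.Icc (t / 2) (2 * t))
    (v : EuclideanSpace ℝ (Fin n)) :
    |gaussKernel n s v * (‖v‖ ^ 2 / s ^ 2 - n / (2 * s))|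
      ≤ (π * (t / 2)) ^ (-(n : ℝ) / 2) * (16 / t + n / t) * exp (-(4 * t)⁻¹ * ‖v‖ ^ 2) := by
  have hs₀ : 0 < s := by linarith [hs.1]
  have hpow : (π * s) ^ (-(n : ℝ) / 2) ≤ (π * (t / 2)) ^ (-(n : ℝ) / 2) :=
    rpow_le_rpow_of_nonpos (by positivity) (by gcongr; exact hs.1)
      (by rw [neg_div]; exact neg_nonpos.2 (by positivity))
  rw [abs_mul, abs_of_nonneg (gaussKernel_nonneg n hs₀.le v), gaussKernel, mul_assoc, mul_assoc]
  exact mul_le_mul hpow (exp_neg_div_mul_abs_le n (by positivity) ht hs) (by positivity)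
    (by positivity)

theorem hasDerivAt_integral_mul_of_bounded {α : Type*} [MeasurableSpace α] {μ : Measure α}
    {K K' : ℝ → α → ℝ} {z bound : α → ℝ} {t C : ℝ} {S : Set ℝ} (hS : S ∈ nhds t)
    (hK_meas : ∀ s ∈ S, AEStronglyMeasurable (K s) μ) (hK_int : Integrable (K t) μ)
    (hK'_meas : AEStronglyMeasurable (K' t) μ) (hz_meas : AEStronglyMeasurable z μ)
    (hz : ∀ y, |z y| ≤ C) (hK'_le : ∀ y, ∀ s ∈ S, |K' s y| ≤ bound y)
    (hbound : Integrable bound μ) (hK' : ∀ y, ∀ s ∈ S, HasDerivAt (K · y) (K' s y) s) :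
    HasDerivAt (fun s => ∫ y, K s y * z y ∂μ) (∫ y, K' t y * z y ∂μ) t := by
  refine (hasDerivAt_integral_of_dominated_loc_of_deriv_le (bound := fun y => bound y * C) hS
    (Filter.eventually_of_mem hS fun s hs => (hK_meas s hs).mul hz_meas)
    (hK_int.mul_bdd hz_meas (.of_forall hz)) (hK'_meas.mul hz_meas) (.of_forall fun y s hs => ?_)
    (hbound.mul_const C) (.of_forall fun y s hs => (hK' y s hs).mul_const (z y))).2
  rw [norm_mul, norm_eq_abs, norm_eq_abs]
  exact mul_le_mul (hK'_le y s hs) (hz y) (abs_nonneg _)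
    ((abs_nonneg _).trans (hK'_le y t (mem_of_mem_nhds hS)))

/-- Laplacian-of-Gaussian form of the blur derivative:
`∂/∂t (G_t ⋆ z)(x) = (1/4)·((Δ G_t) ⋆ z)(x)` for bounded continuous signals. -/
theorem blur_deriv_eq_laplacian_of_gaussian (n : ℕ)
    (z : EuclideanSpace ℝ (Fin n) → ℝ)
    (hz : Continuous z) (hb : ∃ C : ℝ, ∀ x, |z x| ≤ C)
    (t : ℝ) (ht : 0 < t) (x : EuclideanSpace ℝ (Fin n)) :
    HasDerivAt (fun s => gaussBlur n s z x)
      ((1 / 4) * ∫ y, laplacian n (gaussKernel n t) (x - y) * z y) t := by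
  obtain ⟨C, hC⟩ := hb
  have hS : Set.Icc (t / 2) (2 * t) ∈ nhds t := Icc_mem_nhds (by linarith) (by linarith)
  have hshift (s : ℝ) : Continuous fun y => gaussKernel n s (x - y) :=
    (continuous_gaussKernel n s).comp (continuous_sub_left x)
  have hderiv := hasDerivAt_integral_mul_of_bounded (μ := volume) hS
    (K := fun s y => gaussKernel n s (x - y))
    (K' := fun s y => gaussKernel n s (x - y) * (‖x - y‖ ^ 2 / s ^ 2 - n / (2 * s)))
    (fun s _ => (hshift s).aestronglyMeasurable) ((integrable_gaussKernel n ht).comp_sub_left x)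
    (by fun_prop) hz.aestronglyMeasurable hC
    (fun y s hs => abs_gaussKernel_mul_le n ht hs (x - y))
    (((integrable_exp_neg_mul_sq_norm (by positivity)).comp_sub_left x).const_mul _)
    (fun y s hs => hasDerivAt_gaussKernel_scale n (by linarith [hs.1]) (x - y))
  refine hderiv.congr_deriv ?_
  rw [← integral_const_mul]
  congr 1 with y
  rw [laplacian_gaussKernel]
  field_simp
  ring
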